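/- For infinitely many N there exist a set S of N points in the plane in general position and a triangulation T of S such that every set of ps-flippable edges of T has size at most N/2 − 2; that is, the bound N/2 − 2 on the size of a guaranteed set of ps-flippable edges is tight. -/

import Mathlib

open scoped Classical

noncomputable section

/-- Points of the plane. -/
abbrev Pt : Type := ℝ × ℝ

/-- A finite point set is in general position if no three of its points are collinear. -/
def GenPos (S : Finset Pt) : Prop :=
  ∀ p ∈ S, ∀ q ∈ S, ∀ r ∈ S, p ≠ q → p ≠ r → q ≠ r →
    ¬ Collinear ℝ ({p, q, r} : Set Pt)

/-- The closed straight segment spanned by an unordered pair of points. -/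
def seg2 (e : Sym2 Pt) : Set Pt :=
  Sym2.lift ⟨fun p q => segment ℝ p q, fun p q => segment_symm ℝ p q⟩ e

/-- A crossing-free straight-edge graph (plane graph) on the point set `S`:
its edges are straight segments between points of `S`, any two of which
meet only at shared endpoints. -/
structure PlaneGraph (S : Finset Pt) where
  edges : Finset (Sym2 Pt)
  endpoint_mem : ∀ e ∈ edges, ∀ p, p ∈ e → p ∈ S
  not_isDiag : ∀ e ∈ edges, ¬ e.IsDiag
  noncrossing : ∀ e₁ ∈ edges, ∀ e₂ ∈ edges, e₁ ≠ e₂ →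
    ∀ x ∈ seg2 e₁ ∩ seg2 e₂, x ∈ e₁ ∧ x ∈ e₂

/-- A triangulation of `S` is a maximal plane graph on `S`. -/
def IsTriangulation {S : Finset Pt} (T : PlaneGraph S) : Prop :=
  ∀ G : PlaneGraph S, T.edges ⊆ G.edges → G.edges = T.edges

/-- `tr S`: the number of triangulations of `S`. -/
def triCount (S : Finset Pt) : ℕ :=
  Nat.card {T : PlaneGraph S // IsTriangulation T}

/-- A plane graph is a spanning cycle of `S` if its edges form a Hamiltonian
cycle on `S`. -/
def IsSpanningCycle {S : Finset Pt} (G : PlaneGraph S) : Prop :=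
  3 ≤ S.card ∧ ∃ f : Fin S.card ≃ {p : Pt // p ∈ S},
    G.edges =
      Finset.image (fun i : Fin S.card => s(((f i : Pt)), ((f (finRotate S.card i) : Pt)))) Finset.univ

/-- `sc S`: the number of crossing-free straight-edge spanning cycles of `S`. -/
def scCount (S : Finset Pt) : ℕ :=
  Nat.card {G : PlaneGraph S // IsSpanningCycle G}

/-- A plane graph is a perfect matching of `S` if every point of `S` is incident
to exactly one edge. -/
def IsPerfectMatching {S : Finset Pt} (G : PlaneGraph S) : Prop :=
  ∀ p ∈ S, ∃! e, e ∈ G.edges ∧ p ∈ e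

/-- `pm S`: the number of crossing-free straight-edge perfect matchings of `S`. -/
def pmCount (S : Finset Pt) : ℕ :=
  Nat.card {G : PlaneGraph S // IsPerfectMatching G}

/-- The support of a plane graph `G` on `S`: the number of triangulations of `S`
containing all edges of `G`. -/
def supp {S : Finset Pt} (G : PlaneGraph S) : ℕ :=
  Nat.card {T : PlaneGraph S // IsTriangulation T ∧ G.edges ⊆ T.edges}

/-- A finite set of points is in (strictly) convex position. -/
def InConvexPosition (Q : Finset Pt) : Prop :=
  ∀ p ∈ Q, p ∉ convexHull ℝ (↑(Q.erase p) : Set Pt)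

/-- `p q` is an edge of the convex hull boundary of `Q`. -/
def IsHullEdgeOf (Q : Finset Pt) (p q : Pt) : Prop :=
  p ∈ Q ∧ q ∈ Q ∧ p ≠ q ∧
    segment ℝ p q ⊆ frontier (convexHull ℝ (Q : Set Pt))

/-- `e` is a diagonal of the convex polygon with vertex set `Q`. -/
def IsDiagonalOf (Q : Finset Pt) (e : Sym2 Pt) : Prop :=
  ∃ p ∈ Q, ∃ q ∈ Q, e = s(p, q) ∧
    openSegment ℝ p q ⊆ interior (convexHull ℝ (Q : Set Pt))

/-- `F` is a set of ps-flippable (pseudo-simultaneously flippable) edges of the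
triangulation `T`: the edges of `F` are diagonals of pairwise interior-disjoint
(empty) convex polygons whose boundary edges all belong to `T`. -/
def IsPsFlippable {S : Finset Pt} (T : PlaneGraph S) (F : Finset (Sym2 Pt)) : Prop :=
  F ⊆ T.edges ∧
  ∃ 𝒬 : Finset (Finset Pt),
    (∀ Q ∈ 𝒬, ↑Q ⊆ (S : Set Pt) ∧ 3 ≤ Q.card ∧ InConvexPosition Q ∧
      (∀ p q, IsHullEdgeOf Q p q → s(p, q) ∈ T.edges) ∧
      (∀ p ∈ S, p ∉ interior (convexHull ℝ (Q : Set Pt)))) ∧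
    (∀ Q ∈ 𝒬, ∀ Q' ∈ 𝒬, Q ≠ Q' →
      interior (convexHull ℝ (Q : Set Pt)) ∩ interior (convexHull ℝ (Q' : Set Pt)) = ∅) ∧
    (∀ e ∈ F, ∃ Q ∈ 𝒬, IsDiagonalOf Q e)

/-- The drawing of a plane graph: the union of its (closed) edge segments and
its vertex set. -/
def drawing {S : Finset Pt} (G : PlaneGraph S) : Set Pt :=
  (⋃ e ∈ G.edges, seg2 e) ∪ (S : Set Pt)

/-- A convex decomposition of `S`: a plane graph containing all convex hull
boundary edges, whose bounded faces are all convex, and with no isolated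
vertices. -/
def IsConvexDecomposition {S : Finset Pt} (D : PlaneGraph S) : Prop :=
  (∀ p q, IsHullEdgeOf S p q → s(p, q) ∈ D.edges) ∧
  (∀ x ∉ drawing D, Bornology.IsBounded (connectedComponentIn (drawing D)ᶜ x) →
    Convex ℝ (connectedComponentIn (drawing D)ᶜ x)) ∧
  (∀ p ∈ S, ∃ e ∈ D.edges, p ∈ e)

/-- `p` is an interior vertex of `S` (not on the convex hull boundary). -/
def InteriorVtx (S : Finset Pt) (p : Pt) : Prop :=
  p ∈ S ∧ p ∉ frontier (convexHull ℝ (S : Set Pt))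

/-- `p` has a valid triple of edges in `G`. -/
def IsValidAt {S : Finset Pt} (G : PlaneGraph S) (p : Pt) : Prop :=
  ∃ a ∈ S, ∃ b ∈ S, ∃ c ∈ S,
    p ∈ convexHull ℝ ({a, b, c} : Set Pt) ∧
    s(p, a) ∈ G.edges ∧ s(p, b) ∈ G.edges ∧ s(p, c) ∈ G.edges

/-- The degree of a point in a plane graph. -/
def degree {S : Finset Pt} (G : PlaneGraph S) (p : Pt) : ℕ :=
  (G.edges.filter (fun e => p ∈ e)).card

/-- `a b c` span a triangular face of the triangulation `T`. -/
def IsTriFace {S : Finset Pt} (T : PlaneGraph S) (a b c : Pt) : Prop :=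
  a ∈ S ∧ b ∈ S ∧ c ∈ S ∧
  s(a, b) ∈ T.edges ∧ s(b, c) ∈ T.edges ∧ s(a, c) ∈ T.edges ∧
  ∀ p ∈ S, p ∉ interior (convexHull ℝ ({a, b, c} : Set Pt))

/-- An edge of a triangulation is flippable if its two incident triangles form
a convex quadrilateral. -/
def IsFlippable {S : Finset Pt} (T : PlaneGraph S) (e : Sym2 Pt) : Prop :=
  e ∈ T.edges ∧ ∃ a b c d : Pt, e = s(a, b) ∧ c ≠ d ∧
    IsTriFace T a b c ∧ IsTriFace T a b d ∧
    (openSegment ℝ a b ∩ openSegment ℝ c d).Nonempty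

/-- `flip T`: the number of flippable edges of `T`. -/
def flipCount {S : Finset Pt} (T : PlaneGraph S) : ℕ :=
  (T.edges.filter (fun e => IsFlippable T e)).card

/-- `v3 T`: the number of interior vertices of degree 3 in `T`. -/
def v3 {S : Finset Pt} (T : PlaneGraph S) : ℕ :=
  (S.filter (fun p => p ∉ frontier (convexHull ℝ (S : Set Pt)) ∧ degree T p = 3)).card

/-- The number of vertices of `S` on its convex hull boundary. -/
def hullVtxCount (S : Finset Pt) : ℕ :=
  (S.filter (fun p => p ∈ frontier (convexHull ℝ (S : Set Pt)))).card

/-!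
Take the `k` points `parabolaPt a = (a, a²)`, `a < k`, and for `1 ≤ a ≤ k - 2` the point `liftPt a`
at height `1/2` above `parabolaPt a`: `N = 2k - 2` points, in general position by a parity
argument on the integer `2 · orient`. Triangulate by the spokes from `parabolaPt 0`, the rim path
along the parabola, and by joining each `liftPt a` to the three corners of the fan triangle that
contains it; every crossing question is decided by the sign of an integer polynomial `fanDet`.
The rim edges and the two outer spokes have all points on one side, so they are diagonals of no
convex polygon on the set. An edge at `liftPt a` is not one either: in a convex polygon with
vertex `liftPt a`, its two polygon neighbours and the other end of the diagonal would be the three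
corners of the fan triangle, whose hull contains `liftPt a`. So only the `k - 3 = N/2 - 2` inner
spokes can be ps-flippable.
-/

open Topology

-- twice the signed area of the triangle `pqr`: positive iff `r` lies left of the line `p → q`
def orient (p q r : Pt) : ℝ := (q.1 - p.1) * (r.2 - p.2) - (r.1 - p.1) * (q.2 - p.2)

lemma orient_swap (p q r : Pt) : orient q p r = -orient p q r := by
  simp only [orient]; ring

lemma orient_rotate (p q r : Pt) : orient p q r = orient q r p := by
  simp only [orient]; ring

@[simp] lemma orient_self_left (p q : Pt) : orient p q p = 0 := by
  simp only [orient]; ring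

@[simp] lemma orient_self_right (p q : Pt) : orient p q q = 0 := by
  simp only [orient]; ring

lemma orient_add_smul (p q u v : Pt) {s t : ℝ} (hst : s + t = 1) :
    orient p q (s • u + t • v) = s * orient p q u + t * orient p q v := by
  simp only [orient, Prod.fst_add, Prod.snd_add, Prod.smul_fst, Prod.smul_snd, smul_eq_mul]
  linear_combination (p.2 * (q.1 - p.1) - p.1 * (q.2 - p.2)) * hst

lemma orient_mem_uIcc (p q : Pt) {u v x : Pt} (hx : x ∈ segment ℝ u v) :
    orient p q x ∈ Set.uIcc (orient p q u) (orient p q v) := by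
  obtain ⟨s, t, hs, ht, hst, rfl⟩ := hx
  rw [← segment_eq_uIcc, orient_add_smul p q u v hst]
  exact ⟨s, t, hs, ht, hst, rfl⟩

lemma orient_eq_zero_of_mem_segment {p q x : Pt} (hx : x ∈ segment ℝ p q) : orient p q x = 0 := by
  simpa using orient_mem_uIcc p q hx

lemma convex_orient_nonneg (p q : Pt) : Convex ℝ {x | 0 ≤ orient p q x} := by
  intro u hu v hv s t hs ht hst
  rw [Set.mem_ofPred_eq, orient_add_smul p q u v hst]
  exact add_nonneg (mul_nonneg hs hu) (mul_nonneg ht hv)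

lemma disjoint_segment_of_orient_mul_pos {a b c d : Pt} (h : 0 < orient a b c * orient a b d) :
    Disjoint (segment ℝ a b) (segment ℝ c d) := by
  refine Set.disjoint_left.2 fun x hab hcd => ?_
  have h₀ := orient_eq_zero_of_mem_segment hab
  rcases Set.mem_uIcc.1 (orient_mem_uIcc a b hcd) with h₁ | h₁ <;>
    rcases mul_pos_iff.1 h with h₂ | h₂ <;> linarith [h₁.1, h₁.2, h₂.1, h₂.2]

lemma eq_of_mem_segment_of_mem_segment {p q r x : Pt} (h : orient p q r ≠ 0)
    (hq : x ∈ segment ℝ p q) (hr : x ∈ segment ℝ p r) : x = p := by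
  have h₀ := orient_eq_zero_of_mem_segment hq
  obtain ⟨s, t, -, -, hst, rfl⟩ := hr
  rw [orient_add_smul p q p r hst, orient_self_left, mul_zero, zero_add] at h₀
  obtain rfl := (mul_eq_zero.1 h₀).resolve_right h
  obtain rfl : s = 1 := by linarith
  simp

lemma openSegment_inter_nonempty_of_orient {a b c d : Pt} (ha : orient c d a < 0)
    (hb : 0 < orient c d b) (hc : 0 < orient a b c) (hd : orient a b d < 0) :
    (openSegment ℝ a b ∩ openSegment ℝ c d).Nonempty := by
  -- both pairs of barycentric weights have the common denominator `K`
  set K := orient c d b - orient c d a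
  have hK : 0 < K := by linarith
  have hK' : orient a b c - orient a b d = K := by simp only [K, orient]; ring
  refine ⟨(orient c d b / K) • a + (-orient c d a / K) • b,
    ⟨_, _, by positivity, div_pos (by linarith) hK,
      by rw [← add_div, show orient c d b + -orient c d a = K by ring, div_self hK.ne'],
      rfl⟩,
    ⟨-orient a b d / K, orient a b c / K, div_pos (by linarith) hK, by positivity,
      by rw [← add_div, show -orient a b d + orient a b c = K by linarith,
        div_self hK.ne'], ?_⟩⟩
  have hK0 : K ≠ 0 := hK.ne'
  ext <;> simp only [Prod.fst_add, Prod.snd_add, Prod.smul_fst, Prod.smul_snd, smul_eq_mul] <;>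
    field_simp <;> simp only [orient] <;> ring

lemma orient_eq_zero_of_collinear {p q r : Pt} (h : Collinear ℝ ({p, q, r} : Set Pt)) :
    orient p q r = 0 := by
  obtain ⟨v, hv⟩ := (collinear_iff_of_mem (Set.mem_insert p {q, r})).1 h
  obtain ⟨tq, rfl⟩ := hv q (by simp)
  obtain ⟨tr, rfl⟩ := hv r (by simp)
  simp only [orient, vadd_eq_add, Prod.fst_add, Prod.snd_add, Prod.smul_fst, Prod.smul_snd,
    smul_eq_mul]
  ring

lemma collinear_of_orient_eq_zero {p q r : Pt} (hpq : p ≠ q) (h : orient p q r = 0) :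
    Collinear ℝ ({p, q, r} : Set Pt) := by
  obtain ⟨t, ht⟩ : ∃ t : ℝ, r = t • (q - p) + p := by
    simp only [orient] at h
    by_cases h₁ : q.1 = p.1
    · have h₂ : q.2 - p.2 ≠ 0 := fun h₂ => hpq (Prod.ext h₁.symm (by linarith))
      refine ⟨(r.2 - p.2) / (q.2 - p.2), Prod.ext ?_ ?_⟩ <;>
        simp only [Prod.fst_add, Prod.snd_add, Prod.smul_fst, Prod.smul_snd, Prod.fst_sub,
          Prod.snd_sub, smul_eq_mul, h₁] at h ⊢
      · have : (r.1 - p.1) * (q.2 - p.2) = 0 := by linarith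
        have := (mul_eq_zero.1 this).resolve_right h₂
        linarith
      · field_simp; ring
    · have h₁ : q.1 - p.1 ≠ 0 := sub_ne_zero.2 h₁
      refine ⟨(r.1 - p.1) / (q.1 - p.1), Prod.ext ?_ ?_⟩ <;>
        simp only [Prod.fst_add, Prod.snd_add, Prod.smul_fst, Prod.smul_snd, Prod.fst_sub,
          Prod.snd_sub, smul_eq_mul]
      · field_simp; ring
      · field_simp; linear_combination h
  rw [collinear_iff_of_mem (p₀ := p) (by simp)]
  refine ⟨q - p, ?_⟩
  simp only [Set.mem_insert_iff, Set.mem_singleton_iff]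
  rintro x (rfl | rfl | rfl)
  · exact ⟨0, by simp⟩
  · exact ⟨1, by simp⟩
  · exact ⟨t, by rw [ht, vadd_eq_add]⟩

lemma GenPos.orient_ne_zero {S : Finset Pt} (hS : GenPos S) {p q r : Pt} (hp : p ∈ S)
    (hq : q ∈ S) (hr : r ∈ S) (hpq : p ≠ q) (hpr : p ≠ r) (hqr : q ≠ r) : orient p q r ≠ 0 :=
  fun h => hS p hp q hq r hr hpq hpr hqr (collinear_of_orient_eq_zero hpq h)

lemma GenPos.mono {S S' : Finset Pt} (hS : GenPos S) (h : S' ⊆ S) : GenPos S' :=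
  fun p hp q hq r hr => hS p (h hp) q (h hq) r (h hr)

lemma genPos_of_orient_ne_zero {S : Finset Pt}
    (h : ∀ p ∈ S, ∀ q ∈ S, ∀ r ∈ S, p ≠ q → p ≠ r → q ≠ r → orient p q r ≠ 0) : GenPos S :=
  fun p hp q hq r hr hpq hpr hqr hcol =>
    h p hp q hq r hr hpq hpr hqr (orient_eq_zero_of_collinear hcol)

lemma notMem_interior_of_orient_eq_zero {p q : Pt} (hpq : p ≠ q) {C : Set Pt}
    (hC : ∀ y ∈ C, 0 ≤ orient p q y) {z : Pt} (hz : orient p q z = 0) : z ∉ interior C := by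
  intro hzC
  -- moving from `z` along the outer normal `n` of the half-plane leaves `C` at once
  set n : Pt := (q.2 - p.2, -(q.1 - p.1))
  have hcont : Continuous fun t : ℝ => z + t • n := by fun_prop
  have hnear : ∀ᶠ t in 𝓝[>] (0 : ℝ), z + t • n ∈ interior C :=
    nhdsWithin_le_nhds <| (hcont.tendsto' 0 z (by simp)).eventually
      (isOpen_interior.mem_nhds hzC)
  obtain ⟨t, ht, htpos⟩ := (hnear.and self_mem_nhdsWithin).exists
  have hval := hC _ (interior_subset ht)
  have hpos : 0 < (q.1 - p.1) ^ 2 + (q.2 - p.2) ^ 2 := by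
    by_contra! h
    exact hpq (Prod.ext (by nlinarith) (by nlinarith))
  simp only [orient, n, Prod.fst_add, Prod.snd_add, Prod.smul_fst, Prod.smul_snd,
    smul_eq_mul] at hval hz
  nlinarith [mul_pos (Set.mem_Ioi.1 htpos) hpos]

lemma IsHullEdgeOf.symm {Q : Finset Pt} {p q : Pt} (h : IsHullEdgeOf Q p q) :
    IsHullEdgeOf Q q p :=
  ⟨h.2.1, h.1, h.2.2.1.symm, segment_symm ℝ p q ▸ h.2.2.2⟩

lemma isDiagonalOf_mk_iff {Q : Finset Pt} {u w : Pt} :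
    IsDiagonalOf Q s(u, w) ↔
      u ∈ Q ∧ w ∈ Q ∧ openSegment ℝ u w ⊆ interior (convexHull ℝ (Q : Set Pt)) := by
  constructor
  · rintro ⟨p, hp, q, hq, he, hpq⟩
    rcases Sym2.eq_iff.1 he with ⟨rfl, rfl⟩ | ⟨rfl, rfl⟩
    · exact ⟨hp, hq, hpq⟩
    · exact ⟨hq, hp, openSegment_symm ℝ u w ▸ hpq⟩
  · rintro ⟨hu, hw, huw⟩
    exact ⟨u, hu, w, hw, rfl, huw⟩

lemma convexHull_subset_orient_nonneg {p q : Pt} {Q : Finset Pt}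
    (hQ : ∀ y ∈ Q, 0 ≤ orient p q y) : convexHull ℝ (Q : Set Pt) ⊆ {x | 0 ≤ orient p q x} :=
  convexHull_min (fun y hy => hQ y hy) (convex_orient_nonneg p q)

lemma isHullEdgeOf_of_orient_nonneg {Q : Finset Pt} {v r : Pt} (hv : v ∈ Q) (hr : r ∈ Q)
    (hvr : v ≠ r) (h : ∀ y ∈ Q, 0 ≤ orient v r y) : IsHullEdgeOf Q v r := by
  refine ⟨hv, hr, hvr, fun z hz => ⟨subset_closure ?_, ?_⟩⟩
  · exact segment_subset_convexHull (Finset.mem_coe.2 hv) (Finset.mem_coe.2 hr) hz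
  · exact notMem_interior_of_orient_eq_zero hvr (convexHull_subset_orient_nonneg h)
      (orient_eq_zero_of_mem_segment hz)

lemma IsHullEdgeOf.not_isDiagonalOf {Q : Finset Pt} {v r : Pt} (h : IsHullEdgeOf Q v r) :
    ¬ IsDiagonalOf Q s(v, r) := by
  rw [isDiagonalOf_mk_iff]
  rintro ⟨-, -, hvr⟩
  obtain ⟨z, hz⟩ : (openSegment ℝ v r).Nonempty := ⟨_, ⟨1/2, 1/2, by norm_num, by norm_num,
    by norm_num, rfl⟩⟩
  exact Set.disjoint_left.1 disjoint_interior_frontier (hvr hz)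
    (h.2.2.2 (openSegment_subset_segment ℝ v r hz))

lemma not_isDiagonalOf_of_orient_nonneg {Q : Finset Pt} {u w : Pt} (huw : u ≠ w)
    (hQ : ∀ y ∈ Q, 0 ≤ orient u w y) : ¬ IsDiagonalOf Q s(u, w) := fun h =>
  have ⟨hu, hw, _⟩ := isDiagonalOf_mk_iff.1 h
  (isHullEdgeOf_of_orient_nonneg hu hw huw hQ).not_isDiagonalOf h

/-- Seen from a vertex `v` of a convex polygon in general position, the other vertices span
an angle `< π`; its two bounding rays point to two distinct vertices `r` and `s`. -/
lemma exists_orient_extremes {Q : Finset Pt} (hQ : GenPos Q) (hcard : 3 ≤ Q.card)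
    (hconv : InConvexPosition Q) {v : Pt} (hv : v ∈ Q) :
    ∃ r ∈ Q, ∃ s ∈ Q, r ≠ s ∧ v ≠ r ∧ v ≠ s ∧
      (∀ y ∈ Q, 0 ≤ orient v r y) ∧ (∀ y ∈ Q, 0 ≤ orient s v y) := by
  obtain ⟨f, u, hfv, hfy⟩ := geometric_hahn_banach_point_closed (convex_convexHull ℝ _)
    ((Q.erase v).finite_toSet.isCompact_convexHull ℝ).isClosed (hconv v hv)
  set A : ℝ := f (1, 0)
  set B : ℝ := f (0, 1)
  have hf : ∀ z : Pt, f z = A * z.1 + B * z.2 := fun z => by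
    conv_lhs => rw [show z = z.1 • ((1, 0) : Pt) + z.2 • ((0, 1) : Pt) by ext <;> simp]
    simp only [map_add, map_smul, smul_eq_mul, A, B]; ring
  -- `num y / den y` is the cotangent of the angle at `v` between `y` and the normal of `f`
  set den : Pt → ℝ := fun y => A * (y.1 - v.1) + B * (y.2 - v.2)
  set num : Pt → ℝ := fun y => A * (y.2 - v.2) - B * (y.1 - v.1)
  have hden : ∀ y ∈ Q.erase v, 0 < den y := fun y hy => by
    have := hfy y (subset_convexHull ℝ _ hy)
    simp only [den]; linarith [hf y, hf v]
  have hid : ∀ r y, (A ^ 2 + B ^ 2) * orient v r y = den r * num y - den y * num r :=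
    fun r y => by simp only [orient, den, num]; ring
  have hne : (Q.erase v).Nonempty := by
    rw [← Finset.card_pos, Finset.card_erase_of_mem hv]; omega
  obtain ⟨r, hr, hrmin⟩ := Finset.exists_min_image (Q.erase v) (fun y => num y / den y) hne
  obtain ⟨s, hs, hsmax⟩ := Finset.exists_max_image (Q.erase v) (fun y => num y / den y) hne
  have hAB : 0 < A ^ 2 + B ^ 2 := by
    have := hden r hr
    by_contra! h
    have hA : A = 0 := by nlinarith
    have hB : B = 0 := by nlinarith
    simp [den, hA, hB] at this
  have horient : ∀ p ∈ Q.erase v, ∀ q ∈ Q.erase v, num p / den p ≤ num q / den q →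
      0 ≤ orient v p q := fun p hp q hq hpq => by
    rw [← mul_nonneg_iff_of_pos_left hAB, hid]
    nlinarith [(div_le_div_iff₀ (hden p hp) (hden q hq)).1 hpq]
  have hr_ext : ∀ y ∈ Q, 0 ≤ orient v r y := fun y hy => by
    rcases eq_or_ne y v with rfl | hyv
    · exact (orient_self_left _ _).ge
    · exact horient r hr y (Finset.mem_erase.2 ⟨hyv, hy⟩) (hrmin y (Finset.mem_erase.2 ⟨hyv, hy⟩))
  have hs_ext : ∀ y ∈ Q, 0 ≤ orient s v y := fun y hy => by
    rcases eq_or_ne y v with rfl | hyv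
    · exact (orient_self_right _ _).ge
    · have hy' := Finset.mem_erase.2 ⟨hyv, hy⟩
      rw [show orient s v y = orient v y s by simp only [orient]; ring]
      exact horient y hy' s hs (hsmax y hy')
  have hrs : r ≠ s := by
    rintro rfl
    obtain ⟨y, hy, hyr⟩ := Finset.exists_mem_ne (by rw [Finset.card_erase_of_mem hv]; omega) r
    obtain ⟨hyv, hyQ⟩ := Finset.mem_erase.1 hy
    obtain ⟨hrv, hrQ⟩ := Finset.mem_erase.1 hr
    refine hQ.orient_ne_zero hv hrQ hyQ hrv.symm hyv.symm hyr.symm (le_antisymm ?_ (hr_ext y hyQ))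
    rw [← neg_nonneg, ← orient_swap]
    exact hs_ext y hyQ
  exact ⟨r, Finset.mem_of_mem_erase hr, s, Finset.mem_of_mem_erase hs, hrs,
    (Finset.ne_of_mem_erase hr).symm, (Finset.ne_of_mem_erase hs).symm, hr_ext, hs_ext⟩

lemma exists_two_hullEdges {Q : Finset Pt} (hQ : GenPos Q) (hcard : 3 ≤ Q.card)
    (hconv : InConvexPosition Q) {v : Pt} (hv : v ∈ Q) :
    ∃ r s, r ≠ s ∧ IsHullEdgeOf Q v r ∧ IsHullEdgeOf Q v s := by
  obtain ⟨r, hr, s, hs, hrs, hvr, hvs, hr_ext, hs_ext⟩ := exists_orient_extremes hQ hcard hconv hv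
  exact ⟨r, s, hrs, isHullEdgeOf_of_orient_nonneg hv hr hvr hr_ext,
    (isHullEdgeOf_of_orient_nonneg hs hv hvs.symm hs_ext).symm⟩

lemma not_isDiagonalOf_of_mem_convexHull {Q : Finset Pt} (hQ : GenPos Q) (hcard : 3 ≤ Q.card)
    (hconv : InConvexPosition Q) {v a b c y : Pt} (hv : v ∈ Q)
    (habc : v ∈ convexHull ℝ ({a, b, c} : Set Pt)) (hva : v ≠ a) (hvb : v ≠ b) (hvc : v ≠ c)
    (hnbr : ∀ w, IsHullEdgeOf Q v w → w = a ∨ w = b ∨ w = c) (hy : y = a ∨ y = b ∨ y = c) :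
    ¬ IsDiagonalOf Q s(v, y) := by
  -- the two polygon edges and the diagonal at `v` end in three distinct points of `{a, b, c}`
  intro hdiag
  obtain ⟨r, s, hrs, hr, hs⟩ := exists_two_hullEdges hQ hcard hconv hv
  have hyQ := (isDiagonalOf_mk_iff.1 hdiag).2.1
  have hyr : y ≠ r := by rintro rfl; exact hr.not_isDiagonalOf hdiag
  have hys : y ≠ s := by rintro rfl; exact hs.not_isDiagonalOf hdiag
  have hsub : ({y, r, s} : Finset Pt) ⊆ {a, b, c} := by
    intro t ht
    simp only [Finset.mem_insert, Finset.mem_singleton] at ht ⊢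
    rcases ht with rfl | rfl | rfl
    exacts [hy, hnbr _ hr, hnbr _ hs]
  have heq : ({y, r, s} : Finset Pt) = {a, b, c} := by
    refine Finset.eq_of_subset_of_card_le hsub (Finset.card_le_three.trans (le_of_eq ?_))
    rw [Finset.card_insert_of_notMem (by simp [hyr, hys]),
      Finset.card_pair hrs]
  have habcQ : ({a, b, c} : Set Pt) ⊆ ((Q.erase v : Finset Pt) : Set Pt) := by
    intro t ht
    have htQ : t ∈ ({y, r, s} : Finset Pt) := by rw [heq]; simpa using ht
    simp only [Finset.mem_insert, Finset.mem_singleton] at htQ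
    simp only [Set.mem_insert_iff, Set.mem_singleton_iff] at ht
    refine Finset.mem_coe.2 (Finset.mem_erase.2 ⟨?_, ?_⟩)
    · rcases ht with rfl | rfl | rfl <;> exact Ne.symm ‹v ≠ t›
    · rcases htQ with rfl | rfl | rfl
      exacts [hyQ, hr.2.1, hs.2.1]
  exact hconv v hv (convexHull_mono habcQ habc)

def MeetOnlyAtEndpoints (e₁ e₂ : Sym2 Pt) : Prop :=
  ∀ x ∈ seg2 e₁ ∩ seg2 e₂, x ∈ e₁ ∧ x ∈ e₂

lemma MeetOnlyAtEndpoints.symm {e₁ e₂ : Sym2 Pt} (h : MeetOnlyAtEndpoints e₁ e₂) :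
    MeetOnlyAtEndpoints e₂ e₁ :=
  fun x hx => (h x ⟨hx.2, hx.1⟩).symm

lemma meetOnlyAtEndpoints_of_orient_mul_pos {a b c d : Pt}
    (h : 0 < orient a b c * orient a b d) : MeetOnlyAtEndpoints s(a, b) s(c, d) :=
  fun _ hx => absurd hx.2 (Set.disjoint_left.1 (disjoint_segment_of_orient_mul_pos h) hx.1)

lemma meetOnlyAtEndpoints_of_orient_ne_zero {p q r : Pt} (h : orient p q r ≠ 0) :
    MeetOnlyAtEndpoints s(p, q) s(p, r) := by
  rintro x ⟨hq, hr⟩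
  obtain rfl := eq_of_mem_segment_of_mem_segment h hq hr
  exact ⟨Sym2.mem_mk_left _ _, Sym2.mem_mk_left _ _⟩

lemma PlaneGraph.isTriangulation_of_forall_crossing {S : Finset Pt} (T : PlaneGraph S)
    (h : ∀ u ∈ S, ∀ v ∈ S, u ≠ v → s(u, v) ∉ T.edges →
      ∃ c d, s(c, d) ∈ T.edges ∧ (openSegment ℝ u v ∩ openSegment ℝ c d).Nonempty) :
    IsTriangulation T := by
  intro G hTG
  refine Finset.Subset.antisymm (fun e he => ?_) hTG
  by_contra hne
  induction e using Sym2.ind with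
  | _ u v =>
  have huv : u ≠ v := by simpa using G.not_isDiag _ he
  obtain ⟨c, d, hcd, z, hzuv, hzcd⟩ := h u (G.endpoint_mem _ he u (Sym2.mem_mk_left _ _))
    v (G.endpoint_mem _ he v (Sym2.mem_mk_right _ _)) huv hne
  have hz := (G.noncrossing _ he _ (hTG hcd) (fun h => hne (h ▸ hcd)) z
    ⟨openSegment_subset_segment ℝ u v hzuv, openSegment_subset_segment ℝ c d hzcd⟩).1
  rcases Sym2.mem_iff.1 hz with rfl | rfl
  · exact huv (left_mem_openSegment_iff.1 hzuv)
  · exact huv (right_mem_openSegment_iff.1 hzuv)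

def shiftedParabolaPt (x e : ℤ) : Pt := ((x : ℝ), (x : ℝ) ^ 2 + (e : ℝ) / 2)

def fanDet (x₁ e₁ x₂ e₂ x₃ e₃ : ℤ) : ℤ :=
  2 * (x₂ - x₁) * (x₃ - x₁) * (x₃ - x₂) + (x₂ - x₁) * (e₃ - e₁) - (x₃ - x₁) * (e₂ - e₁)

lemma orient_shiftedParabolaPt (x₁ e₁ x₂ e₂ x₃ e₃ : ℤ) :
    orient (shiftedParabolaPt x₁ e₁) (shiftedParabolaPt x₂ e₂) (shiftedParabolaPt x₃ e₃) =
      (fanDet x₁ e₁ x₂ e₂ x₃ e₃ : ℝ) / 2 := by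
  simp only [orient, shiftedParabolaPt, fanDet]; push_cast; ring

lemma orient_shiftedParabolaPt_nonneg_iff {x₁ e₁ x₂ e₂ x₃ e₃ : ℤ} :
    0 ≤ orient (shiftedParabolaPt x₁ e₁) (shiftedParabolaPt x₂ e₂) (shiftedParabolaPt x₃ e₃) ↔
      0 ≤ fanDet x₁ e₁ x₂ e₂ x₃ e₃ := by
  rw [orient_shiftedParabolaPt, le_div_iff₀ two_pos, zero_mul, Int.cast_nonneg_iff]

lemma shiftedParabolaPt_inj {x e x' e' : ℤ} :
    shiftedParabolaPt x e = shiftedParabolaPt x' e' ↔ x = x' ∧ e = e' := by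
  refine ⟨fun h => ?_, fun ⟨hx, he⟩ => hx ▸ he ▸ rfl⟩
  obtain ⟨h₁, h₂⟩ := Prod.ext_iff.1 h
  simp only [shiftedParabolaPt, Int.cast_inj] at h₁ h₂
  subst h₁
  exact ⟨rfl, by exact_mod_cast (show (e : ℝ) = e' by linarith)⟩

lemma fanDet_ne_zero_of_eq {x₁ x₂ x₃ e e₃ : ℤ} (he₃ : e₃ - e = 0 ∨ e₃ - e = 1 ∨ e₃ - e = -1)
    (h₁₂ : x₁ ≠ x₂) (h₃ : e₃ = e → x₃ ≠ x₁ ∧ x₃ ≠ x₂) : fanDet x₁ e x₂ e x₃ e₃ ≠ 0 := by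
  -- `x₂ - x₁` times an odd number, or times `2 (x₃ - x₁) (x₃ - x₂)` when `e₃ = e`
  rw [show fanDet x₁ e x₂ e x₃ e₃ = (x₂ - x₁) * (2 * ((x₃ - x₁) * (x₃ - x₂)) + (e₃ - e)) by
    simp only [fanDet]; ring]
  refine mul_ne_zero (sub_ne_zero.2 h₁₂.symm) ?_
  rcases eq_or_ne e₃ e with rfl | hne
  · obtain ⟨h₃₁, h₃₂⟩ := h₃ rfl
    simpa [sub_eq_zero] using And.intro h₃₁ h₃₂
  · generalize (x₃ - x₁) * (x₃ - x₂) = m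
    omega

lemma orient_shiftedParabolaPt_ne_zero {x₁ x₂ x₃ e₁ e₂ e₃ : ℤ} (he₁ : e₁ = 0 ∨ e₁ = 1)
    (he₂ : e₂ = 0 ∨ e₂ = 1) (he₃ : e₃ = 0 ∨ e₃ = 1) (h₁₂ : ¬(x₁ = x₂ ∧ e₁ = e₂))
    (h₁₃ : ¬(x₁ = x₃ ∧ e₁ = e₃)) (h₂₃ : ¬(x₂ = x₃ ∧ e₂ = e₃)) :
    orient (shiftedParabolaPt x₁ e₁) (shiftedParabolaPt x₂ e₂) (shiftedParabolaPt x₃ e₃) ≠ 0 := by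
  -- two of the three points lie on the same parabola; rotate them to the front
  rcases (by omega : e₁ = e₂ ∨ e₂ = e₃ ∨ e₃ = e₁) with rfl | rfl | rfl
  · rw [orient_shiftedParabolaPt, div_ne_zero_iff, Int.cast_ne_zero]
    exact ⟨fanDet_ne_zero_of_eq (by omega) (by tauto) (by tauto), two_ne_zero⟩
  · rw [orient_rotate, orient_shiftedParabolaPt, div_ne_zero_iff, Int.cast_ne_zero]
    exact ⟨fanDet_ne_zero_of_eq (by omega) (by tauto) (by tauto), two_ne_zero⟩
  · rw [orient_rotate, orient_rotate, orient_shiftedParabolaPt, div_ne_zero_iff,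
      Int.cast_ne_zero]
    exact ⟨fanDet_ne_zero_of_eq (by omega) (by tauto) (by tauto), two_ne_zero⟩

def parabolaPt (a : ℕ) : Pt := shiftedParabolaPt a 0

def liftPt (a : ℕ) : Pt := shiftedParabolaPt a 1

def fanSet (k : ℕ) : Finset Pt :=
  (Finset.range k).image parabolaPt ∪ (Finset.Icc 1 (k - 2)).image liftPt

@[simp] lemma parabolaPt_inj {a b : ℕ} : parabolaPt a = parabolaPt b ↔ a = b := by
  simp [parabolaPt, shiftedParabolaPt_inj]

@[simp] lemma liftPt_inj {a b : ℕ} : liftPt a = liftPt b ↔ a = b := by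
  simp [liftPt, shiftedParabolaPt_inj]

@[simp] lemma parabolaPt_ne_liftPt (a b : ℕ) : parabolaPt a ≠ liftPt b := by
  simp [parabolaPt, liftPt, shiftedParabolaPt_inj]

@[simp] lemma liftPt_ne_parabolaPt (a b : ℕ) : liftPt a ≠ parabolaPt b :=
  (parabolaPt_ne_liftPt b a).symm

lemma card_fanSet {k : ℕ} (hk : 2 ≤ k) : (fanSet k).card = 2 * k - 2 := by
  rw [fanSet, Finset.card_union_of_disjoint,
    Finset.card_image_of_injective _ fun _ _ => parabolaPt_inj.1,
    Finset.card_image_of_injective _ fun _ _ => liftPt_inj.1, Finset.card_range, Nat.card_Icc]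
  · omega
  · simp [Finset.disjoint_left]

lemma mem_fanSet {k : ℕ} {p : Pt} :
    p ∈ fanSet k ↔ (∃ a < k, parabolaPt a = p) ∨ (∃ a, 1 ≤ a ∧ a ≤ k - 2 ∧ liftPt a = p) := by
  simp [fanSet, and_assoc]

lemma exists_shiftedParabolaPt_of_mem_fanSet {k : ℕ} {p : Pt} (hp : p ∈ fanSet k) :
    ∃ x e : ℤ, (e = 0 ∨ e = 1) ∧ p = shiftedParabolaPt x e := by
  rcases mem_fanSet.1 hp with ⟨a, -, rfl⟩ | ⟨a, -, -, rfl⟩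
  exacts [⟨a, 0, Or.inl rfl, rfl⟩, ⟨a, 1, Or.inr rfl, rfl⟩]

lemma genPos_fanSet (k : ℕ) : GenPos (fanSet k) := by
  refine genPos_of_orient_ne_zero fun p hp q hq r hr hpq hpr hqr => ?_
  obtain ⟨x₁, e₁, he₁, rfl⟩ := exists_shiftedParabolaPt_of_mem_fanSet hp
  obtain ⟨x₂, e₂, he₂, rfl⟩ := exists_shiftedParabolaPt_of_mem_fanSet hq
  obtain ⟨x₃, e₃, he₃, rfl⟩ := exists_shiftedParabolaPt_of_mem_fanSet hr
  exact orient_shiftedParabolaPt_ne_zero he₁ he₂ he₃ (mt shiftedParabolaPt_inj.2 hpq)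
    (mt shiftedParabolaPt_inj.2 hpr) (mt shiftedParabolaPt_inj.2 hqr)

def spokeEdge (a : ℕ) : Sym2 Pt := s(parabolaPt 0, parabolaPt a)
def rimEdge (a : ℕ) : Sym2 Pt := s(parabolaPt a, parabolaPt (a + 1))
def apexEdge (a : ℕ) : Sym2 Pt := s(liftPt a, parabolaPt 0)
def leftEdge (a : ℕ) : Sym2 Pt := s(liftPt a, parabolaPt a)
def rightEdge (a : ℕ) : Sym2 Pt := s(liftPt a, parabolaPt (a + 1))

lemma meetOnlyAtEndpoints_of_fanDet_mul_pos {x₁ e₁ x₂ e₂ x₃ e₃ x₄ e₄ : ℤ}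
    (h : 0 < fanDet x₁ e₁ x₂ e₂ x₃ e₃ * fanDet x₁ e₁ x₂ e₂ x₄ e₄) :
    MeetOnlyAtEndpoints s(shiftedParabolaPt x₁ e₁, shiftedParabolaPt x₂ e₂)
      s(shiftedParabolaPt x₃ e₃, shiftedParabolaPt x₄ e₄) := by
  refine meetOnlyAtEndpoints_of_orient_mul_pos ?_
  rw [orient_shiftedParabolaPt, orient_shiftedParabolaPt, div_mul_div_comm]
  exact div_pos (by exact_mod_cast h) (by norm_num)

lemma meetOnlyAtEndpoints_of_shared {x₁ x₂ x₃ e₁ e₂ e₃ : ℤ} (he₁ : e₁ = 0 ∨ e₁ = 1)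
    (he₂ : e₂ = 0 ∨ e₂ = 1) (he₃ : e₃ = 0 ∨ e₃ = 1) (h₁₂ : ¬(x₁ = x₂ ∧ e₁ = e₂))
    (h₁₃ : ¬(x₁ = x₃ ∧ e₁ = e₃)) (h₂₃ : ¬(x₂ = x₃ ∧ e₂ = e₃)) :
    MeetOnlyAtEndpoints s(shiftedParabolaPt x₁ e₁, shiftedParabolaPt x₂ e₂)
      s(shiftedParabolaPt x₁ e₁, shiftedParabolaPt x₃ e₃) :=
  meetOnlyAtEndpoints_of_orient_ne_zero
    (orient_shiftedParabolaPt_ne_zero he₁ he₂ he₃ h₁₂ h₁₃ h₂₃)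

lemma fanDet_rim (a x e : ℤ) : fanDet a 0 (a + 1) 0 x e = 2 * ((x - a) * (x - (a + 1))) + e := by
  simp only [fanDet]; ring

lemma fanDet_rim_pos {a x e : ℤ} (he : e = 0 ∨ e = 1) (h : (x ≠ a ∧ x ≠ a + 1) ∨ e = 1) :
    0 < fanDet a 0 (a + 1) 0 x e := by
  rw [fanDet_rim]
  have he₀ : 0 ≤ e := by omega
  rcases lt_trichotomy x a with hx | rfl | hx
  · nlinarith [mul_pos_of_neg_of_neg (sub_neg.2 hx) (by omega : x - (a + 1) < 0)]
  · omega
  · rcases eq_or_ne x (a + 1) with rfl | hx'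
    · omega
    · nlinarith [mul_pos (sub_pos.2 hx) (by omega : 0 < x - (a + 1))]

lemma fanDet_rim_nonneg {a x e : ℤ} (he : 0 ≤ e) : 0 ≤ fanDet a 0 (a + 1) 0 x e := by
  rw [fanDet_rim]
  rcases le_or_gt x a with hx | hx
  · nlinarith [mul_nonneg_of_nonpos_of_nonpos (sub_nonpos.2 hx) (by omega : x - (a + 1) ≤ 0)]
  · nlinarith [mul_nonneg (sub_nonneg.2 hx.le) (by omega : 0 ≤ x - (a + 1))]

lemma fanDet_spoke (a x e : ℤ) : fanDet 0 0 a 0 x e = a * (2 * (x * (x - a)) + e) := by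
  simp only [fanDet]; ring

lemma fanDet_apex (a x e : ℤ) : fanDet a 1 0 0 x e = x - 2 * a * (x * (x - a)) - a * e := by
  simp only [fanDet]; ring

lemma fanDet_left (a x e : ℤ) : fanDet a 1 a 0 x e = x - a := by
  simp only [fanDet]; ring

lemma fanDet_right (a x e : ℤ) :
    fanDet a 1 (a + 1) 0 x e = (x - a) * (2 * (x - a) - 1) + (e - 1) := by
  simp only [fanDet]; ring

section
variable {a b : ℕ}

lemma meetOnlyAtEndpoints_spokeEdge_spokeEdge (ha : 1 ≤ a) (hb : 1 ≤ b) (hab : a ≠ b) :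
    MeetOnlyAtEndpoints (spokeEdge a) (spokeEdge b) := by
  refine meetOnlyAtEndpoints_of_shared ?_ ?_ ?_ ?_ ?_ ?_ <;> omega

lemma meetOnlyAtEndpoints_spokeEdge_rimEdge (ha : 1 ≤ a) (hb : 1 ≤ b) :
    MeetOnlyAtEndpoints (spokeEdge a) (rimEdge b) := by
  rcases eq_or_ne a b with rfl | hab
  · rw [spokeEdge, Sym2.eq_swap]
    refine meetOnlyAtEndpoints_of_shared ?_ ?_ ?_ ?_ ?_ ?_ <;> omega
  rcases eq_or_ne a (b + 1) with rfl | hab'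
  · rw [spokeEdge, rimEdge, Sym2.eq_swap, Sym2.eq_swap (a := parabolaPt b)]
    refine meetOnlyAtEndpoints_of_shared ?_ ?_ ?_ ?_ ?_ ?_ <;> omega
  refine (meetOnlyAtEndpoints_of_fanDet_mul_pos (mul_pos ?_ ?_)).symm <;>
    exact fanDet_rim_pos (by simp) (by omega)

lemma meetOnlyAtEndpoints_spokeEdge_apexEdge (ha : 1 ≤ a) :
    MeetOnlyAtEndpoints (spokeEdge a) (apexEdge b) := by
  rw [apexEdge, Sym2.eq_swap]
  refine meetOnlyAtEndpoints_of_shared ?_ ?_ ?_ ?_ ?_ ?_ <;> omega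

lemma meetOnlyAtEndpoints_spokeEdge_leftEdge (ha : 1 ≤ a) (hb : 1 ≤ b) :
    MeetOnlyAtEndpoints (spokeEdge a) (leftEdge b) := by
  rcases eq_or_ne a b with rfl | hab
  · rw [spokeEdge, leftEdge, Sym2.eq_swap, Sym2.eq_swap (a := liftPt a)]
    refine meetOnlyAtEndpoints_of_shared ?_ ?_ ?_ ?_ ?_ ?_ <;> omega
  refine meetOnlyAtEndpoints_of_fanDet_mul_pos ?_
  push_cast
  rw [fanDet_spoke, fanDet_spoke]
  have ha : (0:ℤ) < a := by omega
  rcases lt_or_gt_of_ne hab with h | h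
  · have : (0:ℤ) < b * (b - a) := mul_pos (by omega) (by omega)
    exact mul_pos (mul_pos ha (by linarith)) (mul_pos ha (by linarith))
  · have : (b:ℤ) * (b - a) < 0 := mul_neg_of_pos_of_neg (by omega) (by omega)
    exact mul_pos_of_neg_of_neg (mul_neg_of_pos_of_neg ha (by linarith))
      (mul_neg_of_pos_of_neg ha (by linarith))

lemma meetOnlyAtEndpoints_spokeEdge_rightEdge (ha : 1 ≤ a) (hb : 1 ≤ b) :
    MeetOnlyAtEndpoints (spokeEdge a) (rightEdge b) := by
  rcases eq_or_ne a (b + 1) with rfl | hab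
  · rw [spokeEdge, rightEdge, Sym2.eq_swap, Sym2.eq_swap (a := liftPt b)]
    refine meetOnlyAtEndpoints_of_shared ?_ ?_ ?_ ?_ ?_ ?_ <;> omega
  refine meetOnlyAtEndpoints_of_fanDet_mul_pos ?_
  push_cast
  rw [fanDet_spoke, fanDet_spoke]
  have ha : (0:ℤ) < a := by omega
  rcases le_or_gt a b with h | h
  · have : (0:ℤ) ≤ b * (b - a) := mul_nonneg (by omega) (by omega)
    have : (0:ℤ) < (b + 1) * (b + 1 - a) := mul_pos (by omega) (by omega)
    exact mul_pos (mul_pos ha (by linarith)) (mul_pos ha (by linarith))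
  · have : (b:ℤ) * (b - a) < 0 := mul_neg_of_pos_of_neg (by omega) (by omega)
    have : ((b:ℤ) + 1) * (b + 1 - a) < 0 := mul_neg_of_pos_of_neg (by omega) (by omega)
    exact mul_pos_of_neg_of_neg (mul_neg_of_pos_of_neg ha (by linarith))
      (mul_neg_of_pos_of_neg ha (by linarith))

lemma meetOnlyAtEndpoints_rimEdge_rimEdge (hab : a < b) :
    MeetOnlyAtEndpoints (rimEdge a) (rimEdge b) := by
  rcases eq_or_ne b (a + 1) with rfl | hab'
  · rw [rimEdge, Sym2.eq_swap]
    refine meetOnlyAtEndpoints_of_shared ?_ ?_ ?_ ?_ ?_ ?_ <;> omega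
  refine meetOnlyAtEndpoints_of_fanDet_mul_pos (mul_pos ?_ ?_) <;>
    exact fanDet_rim_pos (by simp) (by omega)

lemma meetOnlyAtEndpoints_rimEdge_apexEdge (ha : 1 ≤ a) :
    MeetOnlyAtEndpoints (rimEdge a) (apexEdge b) := by
  refine meetOnlyAtEndpoints_of_fanDet_mul_pos (mul_pos ?_ ?_) <;>
    exact fanDet_rim_pos (by simp) (by omega)

lemma meetOnlyAtEndpoints_rimEdge_leftEdge :
    MeetOnlyAtEndpoints (rimEdge a) (leftEdge b) := by
  rcases eq_or_ne b a with rfl | hab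
  · rw [leftEdge, Sym2.eq_swap]
    refine meetOnlyAtEndpoints_of_shared ?_ ?_ ?_ ?_ ?_ ?_ <;> omega
  rcases eq_or_ne b (a + 1) with rfl | hab'
  · rw [rimEdge, leftEdge, Sym2.eq_swap, Sym2.eq_swap (a := liftPt (a + 1))]
    refine meetOnlyAtEndpoints_of_shared ?_ ?_ ?_ ?_ ?_ ?_ <;> omega
  refine meetOnlyAtEndpoints_of_fanDet_mul_pos (mul_pos ?_ ?_) <;>
    exact fanDet_rim_pos (by simp) (by omega)

lemma meetOnlyAtEndpoints_rimEdge_rightEdge :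
    MeetOnlyAtEndpoints (rimEdge a) (rightEdge b) := by
  rcases eq_or_ne (b + 1) a with rfl | hab
  · rw [rightEdge, Sym2.eq_swap (a := liftPt b)]
    refine meetOnlyAtEndpoints_of_shared ?_ ?_ ?_ ?_ ?_ ?_ <;> omega
  rcases eq_or_ne b a with rfl | hab'
  · rw [rimEdge, rightEdge, Sym2.eq_swap, Sym2.eq_swap (a := liftPt b)]
    refine meetOnlyAtEndpoints_of_shared ?_ ?_ ?_ ?_ ?_ ?_ <;> omega
  refine meetOnlyAtEndpoints_of_fanDet_mul_pos (mul_pos ?_ ?_) <;>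
    exact fanDet_rim_pos (by simp) (by omega)

lemma meetOnlyAtEndpoints_apexEdge_apexEdge (hab : a ≠ b) :
    MeetOnlyAtEndpoints (apexEdge a) (apexEdge b) := by
  rw [apexEdge, apexEdge, Sym2.eq_swap, Sym2.eq_swap (a := liftPt b)]
  refine meetOnlyAtEndpoints_of_shared ?_ ?_ ?_ ?_ ?_ ?_ <;> omega

lemma meetOnlyAtEndpoints_apexEdge_leftEdge (ha : 1 ≤ a) (hb : 1 ≤ b) :
    MeetOnlyAtEndpoints (apexEdge a) (leftEdge b) := by
  rcases eq_or_ne a b with rfl | hab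
  · refine meetOnlyAtEndpoints_of_shared ?_ ?_ ?_ ?_ ?_ ?_ <;> omega
  refine meetOnlyAtEndpoints_of_fanDet_mul_pos ?_
  push_cast
  rw [fanDet_apex, fanDet_apex]
  rcases lt_or_gt_of_ne hab with h | h
  · have : (0:ℤ) < a * (b * (b - a)) := mul_pos (by omega) (mul_pos (by omega) (by omega))
    have : (0:ℤ) < a * b := mul_pos (by omega) (by omega)
    exact mul_pos_of_neg_of_neg (by nlinarith) (by nlinarith)
  · have : a * ((b:ℤ) * (b - a)) < 0 :=
      mul_neg_of_pos_of_neg (by omega) (mul_neg_of_pos_of_neg (by omega) (by omega))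
    have : (0:ℤ) < a * b := mul_pos (by omega) (by omega)
    exact mul_pos (by nlinarith) (by nlinarith)

lemma meetOnlyAtEndpoints_apexEdge_rightEdge (ha : 1 ≤ a) (hb : 1 ≤ b) :
    MeetOnlyAtEndpoints (apexEdge a) (rightEdge b) := by
  rcases eq_or_ne a b with rfl | hab
  · refine meetOnlyAtEndpoints_of_shared ?_ ?_ ?_ ?_ ?_ ?_ <;> omega
  refine meetOnlyAtEndpoints_of_fanDet_mul_pos ?_
  push_cast
  rw [fanDet_apex, fanDet_apex]
  rcases lt_or_gt_of_ne hab with h | h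
  · have : (0:ℤ) < a * ((b + 1) * (b + 1 - a)) :=
      mul_pos (by omega) (mul_pos (by omega) (by omega))
    have : (0:ℤ) < a * b := mul_pos (by omega) (by omega)
    exact mul_pos_of_neg_of_neg (by nlinarith) (by nlinarith)
  · have : a * (((b:ℤ) + 1) * (b + 1 - a)) ≤ 0 :=
      mul_nonpos_of_nonneg_of_nonpos (by omega)
        (mul_nonpos_of_nonneg_of_nonpos (by omega) (by omega))
    have : (0:ℤ) < a * b := mul_pos (by omega) (by omega)
    exact mul_pos (by nlinarith) (by nlinarith)

lemma meetOnlyAtEndpoints_leftEdge_leftEdge (hab : a ≠ b) :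
    MeetOnlyAtEndpoints (leftEdge a) (leftEdge b) := by
  refine meetOnlyAtEndpoints_of_fanDet_mul_pos ?_
  rw [fanDet_left, fanDet_left]
  exact mul_self_pos.2 (sub_ne_zero.2 (by exact_mod_cast hab.symm))

lemma meetOnlyAtEndpoints_leftEdge_rightEdge :
    MeetOnlyAtEndpoints (leftEdge a) (rightEdge b) := by
  rcases eq_or_ne a b with rfl | hab
  · refine meetOnlyAtEndpoints_of_shared ?_ ?_ ?_ ?_ ?_ ?_ <;> omega
  rcases eq_or_ne a (b + 1) with rfl | hab'
  · rw [leftEdge, rightEdge, Sym2.eq_swap, Sym2.eq_swap (a := liftPt b)]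
    refine meetOnlyAtEndpoints_of_shared ?_ ?_ ?_ ?_ ?_ ?_ <;> omega
  refine meetOnlyAtEndpoints_of_fanDet_mul_pos ?_
  push_cast
  rw [fanDet_left, fanDet_left]
  rcases lt_or_gt_of_ne hab with h | h
  · exact mul_pos (by omega) (by omega)
  · exact mul_pos_of_neg_of_neg (by omega) (by omega)

lemma meetOnlyAtEndpoints_rightEdge_rightEdge (hab : a < b) :
    MeetOnlyAtEndpoints (rightEdge a) (rightEdge b) := by
  refine meetOnlyAtEndpoints_of_fanDet_mul_pos ?_
  push_cast
  rw [fanDet_right, fanDet_right]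
  have : (0:ℤ) < b - a := by omega
  exact mul_pos (by nlinarith) (by nlinarith)
end

def fanEdges (k : ℕ) : Finset (Sym2 Pt) :=
  (Finset.Icc 1 (k - 1)).image spokeEdge ∪ (Finset.Icc 1 (k - 2)).image rimEdge ∪
    (Finset.Icc 1 (k - 2)).image apexEdge ∪ (Finset.Icc 1 (k - 2)).image leftEdge ∪
    (Finset.Icc 1 (k - 2)).image rightEdge

lemma mem_fanEdges {k : ℕ} {e : Sym2 Pt} : e ∈ fanEdges k ↔
    (∃ a, (1 ≤ a ∧ a ≤ k - 1) ∧ spokeEdge a = e) ∨ (∃ a, (1 ≤ a ∧ a ≤ k - 2) ∧ rimEdge a = e) ∨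
    (∃ a, (1 ≤ a ∧ a ≤ k - 2) ∧ apexEdge a = e) ∨ (∃ a, (1 ≤ a ∧ a ≤ k - 2) ∧ leftEdge a = e) ∨
    (∃ a, (1 ≤ a ∧ a ≤ k - 2) ∧ rightEdge a = e) := by
  simp only [fanEdges, Finset.mem_union, Finset.mem_image, Finset.mem_Icc, or_assoc]

lemma fanEdges_meetOnlyAtEndpoints {k : ℕ} {e₁ e₂ : Sym2 Pt} (h₁ : e₁ ∈ fanEdges k)
    (h₂ : e₂ ∈ fanEdges k) (hne : e₁ ≠ e₂) : MeetOnlyAtEndpoints e₁ e₂ := by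
  rcases mem_fanEdges.1 h₁ with ⟨a, ⟨ha, -⟩, rfl⟩ | ⟨a, ⟨ha, -⟩, rfl⟩ | ⟨a, ⟨ha, -⟩, rfl⟩ |
    ⟨a, ⟨ha, -⟩, rfl⟩ | ⟨a, ⟨ha, -⟩, rfl⟩ <;>
  rcases mem_fanEdges.1 h₂ with ⟨b, ⟨hb, -⟩, rfl⟩ | ⟨b, ⟨hb, -⟩, rfl⟩ | ⟨b, ⟨hb, -⟩, rfl⟩ |
    ⟨b, ⟨hb, -⟩, rfl⟩ | ⟨b, ⟨hb, -⟩, rfl⟩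
  · exact meetOnlyAtEndpoints_spokeEdge_spokeEdge ha hb (by rintro rfl; exact hne rfl)
  · exact meetOnlyAtEndpoints_spokeEdge_rimEdge ha hb
  · exact meetOnlyAtEndpoints_spokeEdge_apexEdge ha
  · exact meetOnlyAtEndpoints_spokeEdge_leftEdge ha hb
  · exact meetOnlyAtEndpoints_spokeEdge_rightEdge ha hb
  · exact (meetOnlyAtEndpoints_spokeEdge_rimEdge hb ha).symm
  · rcases lt_or_gt_of_ne (show a ≠ b by rintro rfl; exact hne rfl) with h | h
    · exact meetOnlyAtEndpoints_rimEdge_rimEdge h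
    · exact (meetOnlyAtEndpoints_rimEdge_rimEdge h).symm
  · exact meetOnlyAtEndpoints_rimEdge_apexEdge ha
  · exact meetOnlyAtEndpoints_rimEdge_leftEdge
  · exact meetOnlyAtEndpoints_rimEdge_rightEdge
  · exact (meetOnlyAtEndpoints_spokeEdge_apexEdge hb).symm
  · exact (meetOnlyAtEndpoints_rimEdge_apexEdge hb).symm
  · exact meetOnlyAtEndpoints_apexEdge_apexEdge (by rintro rfl; exact hne rfl)
  · exact meetOnlyAtEndpoints_apexEdge_leftEdge ha hb
  · exact meetOnlyAtEndpoints_apexEdge_rightEdge ha hb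
  · exact (meetOnlyAtEndpoints_spokeEdge_leftEdge hb ha).symm
  · exact meetOnlyAtEndpoints_rimEdge_leftEdge.symm
  · exact (meetOnlyAtEndpoints_apexEdge_leftEdge hb ha).symm
  · exact meetOnlyAtEndpoints_leftEdge_leftEdge (by rintro rfl; exact hne rfl)
  · exact meetOnlyAtEndpoints_leftEdge_rightEdge
  · exact (meetOnlyAtEndpoints_spokeEdge_rightEdge hb ha).symm
  · exact meetOnlyAtEndpoints_rimEdge_rightEdge.symm
  · exact (meetOnlyAtEndpoints_apexEdge_rightEdge hb ha).symm
  · exact meetOnlyAtEndpoints_leftEdge_rightEdge.symm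
  · rcases lt_or_gt_of_ne (show a ≠ b by rintro rfl; exact hne rfl) with h | h
    · exact meetOnlyAtEndpoints_rightEdge_rightEdge h
    · exact (meetOnlyAtEndpoints_rightEdge_rightEdge h).symm

lemma parabolaPt_mem_fanSet {k a : ℕ} (h : a < k) : parabolaPt a ∈ fanSet k :=
  mem_fanSet.2 (Or.inl ⟨a, h, rfl⟩)

lemma liftPt_mem_fanSet {k a : ℕ} (h₁ : 1 ≤ a) (h₂ : a ≤ k - 2) : liftPt a ∈ fanSet k :=
  mem_fanSet.2 (Or.inr ⟨a, h₁, h₂, rfl⟩)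

def fanGraph (k : ℕ) : PlaneGraph (fanSet k) where
  edges := fanEdges k
  endpoint_mem e he p hp := by
    rcases mem_fanEdges.1 he with ⟨a, ha, rfl⟩ | ⟨a, ha, rfl⟩ | ⟨a, ha, rfl⟩ | ⟨a, ha, rfl⟩ |
      ⟨a, ha, rfl⟩ <;>
    simp only [spokeEdge, rimEdge, apexEdge, leftEdge, rightEdge, Sym2.mem_iff] at hp <;>
    rcases hp with rfl | rfl <;>
    first
    | exact parabolaPt_mem_fanSet (by omega)
    | exact liftPt_mem_fanSet (by omega) (by omega)
  not_isDiag e he := by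
    rcases mem_fanEdges.1 he with ⟨a, ha, rfl⟩ | ⟨a, ha, rfl⟩ | ⟨a, ha, rfl⟩ | ⟨a, ha, rfl⟩ |
      ⟨a, ha, rfl⟩ <;>
    simp only [spokeEdge, rimEdge, apexEdge, leftEdge, rightEdge, Sym2.mk_isDiag_iff, parabolaPt,
      liftPt, shiftedParabolaPt_inj] <;> omega
  noncrossing _ h₁ _ h₂ hne := fanEdges_meetOnlyAtEndpoints h₁ h₂ hne

lemma openSegment_inter_nonempty_of_fanDet {x₁ e₁ x₂ e₂ x₃ e₃ x₄ e₄ : ℤ}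
    (h₁ : fanDet x₃ e₃ x₄ e₄ x₁ e₁ < 0) (h₂ : 0 < fanDet x₃ e₃ x₄ e₄ x₂ e₂)
    (h₃ : 0 < fanDet x₁ e₁ x₂ e₂ x₃ e₃) (h₄ : fanDet x₁ e₁ x₂ e₂ x₄ e₄ < 0) :
    (openSegment ℝ (shiftedParabolaPt x₁ e₁) (shiftedParabolaPt x₂ e₂) ∩
      openSegment ℝ (shiftedParabolaPt x₃ e₃) (shiftedParabolaPt x₄ e₄)).Nonempty := by
  apply openSegment_inter_nonempty_of_orient <;>
    rw [orient_shiftedParabolaPt] <;> first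
    | exact div_neg_of_neg_of_pos (by exact_mod_cast ‹_›) two_pos
    | exact div_pos (by exact_mod_cast ‹_›) two_pos

def CrossesSpoke (k : ℕ) (u v : Pt) : Prop :=
  ∃ m, 1 ≤ m ∧ m ≤ k - 1 ∧
    (openSegment ℝ u v ∩ openSegment ℝ (parabolaPt 0) (parabolaPt m)).Nonempty

lemma CrossesSpoke.symm {k : ℕ} {u v : Pt} (h : CrossesSpoke k u v) : CrossesSpoke k v u := by
  obtain ⟨m, hm, hm', hne⟩ := h
  exact ⟨m, hm, hm', by rwa [openSegment_symm]⟩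

section
variable {k : ℕ}

lemma crossesSpoke_parabolaPt_parabolaPt {i j : ℕ} (hj : j < k) (hij : i < j)
    (hnot : s(parabolaPt i, parabolaPt j) ∉ fanEdges k) :
    CrossesSpoke k (parabolaPt i) (parabolaPt j) := by
  rcases Nat.eq_zero_or_pos i with rfl | hi
  · exact absurd (mem_fanEdges.2 (Or.inl ⟨j, by omega, rfl⟩)) hnot
  rcases eq_or_ne j (i + 1) with rfl | hj'
  · exact absurd (mem_fanEdges.2 (Or.inr (Or.inl ⟨i, by omega, rfl⟩))) hnot
  refine ⟨i + 1, by omega, by omega, openSegment_inter_nonempty_of_fanDet ?_ ?_ ?_ ?_⟩ <;>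
    push_cast
  · rw [fanDet_spoke]
    exact mul_neg_of_pos_of_neg (by omega) (by nlinarith)
  · rw [fanDet_spoke]
    exact mul_pos (by omega)
      (by nlinarith [mul_pos (by omega : (0:ℤ) < j) (by omega : (0:ℤ) < j - (i + 1))])
  · simp only [fanDet]
    nlinarith [mul_pos (mul_pos (by omega : (0:ℤ) < j - i) (by omega : (0:ℤ) < i))
      (by omega : (0:ℤ) < j)]
  · simp only [fanDet]
    nlinarith [mul_pos (by omega : (0:ℤ) < j - i) (by omega : (0:ℤ) < j - (i + 1))]

lemma crossesSpoke_liftPt_parabolaPt {a w : ℕ} (ha : 1 ≤ a) (ha' : a ≤ k - 2) (hw : w < k)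
    (hnot : s(liftPt a, parabolaPt w) ∉ fanEdges k) :
    CrossesSpoke k (liftPt a) (parabolaPt w) := by
  rcases Nat.eq_zero_or_pos w with rfl | hw₀
  · exact absurd (mem_fanEdges.2 (Or.inr (Or.inr (Or.inl ⟨a, by omega, rfl⟩)))) hnot
  rcases lt_trichotomy w a with hwa | rfl | hwa
  · refine CrossesSpoke.symm
      ⟨a, by omega, by omega, openSegment_inter_nonempty_of_fanDet ?_ ?_ ?_ ?_⟩ <;> push_cast
    · rw [fanDet_spoke]
      exact mul_neg_of_pos_of_neg (by omega) (by nlinarith)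
    · rw [fanDet_spoke]
      exact mul_pos (by omega) (by nlinarith)
    · simp only [fanDet]
      nlinarith [mul_pos (mul_pos (by omega : (0:ℤ) < a - w) (by omega : (0:ℤ) < a))
        (by omega : (0:ℤ) < w)]
    · simp only [fanDet]
      nlinarith
  · exact absurd (mem_fanEdges.2 (Or.inr (Or.inr (Or.inr (Or.inl ⟨w, by omega, rfl⟩))))) hnot
  rcases eq_or_ne w (a + 1) with rfl | hwa'
  · exact absurd (mem_fanEdges.2 (Or.inr (Or.inr (Or.inr (Or.inr ⟨a, by omega, rfl⟩))))) hnot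
  refine ⟨a + 1, by omega, by omega, openSegment_inter_nonempty_of_fanDet ?_ ?_ ?_ ?_⟩ <;>
    push_cast
  · rw [fanDet_spoke]
    exact mul_neg_of_pos_of_neg (by omega) (by nlinarith)
  · rw [fanDet_spoke]
    exact mul_pos (by omega)
      (by nlinarith [mul_pos (by omega : (0:ℤ) < w) (by omega : (0:ℤ) < w - (a + 1))])
  · simp only [fanDet]
    have h : (1:ℤ) ≤ (w - a) * a := by nlinarith
    nlinarith [mul_le_mul_of_nonneg_right h (by omega : (0:ℤ) ≤ w)]
  · simp only [fanDet]
    nlinarith [mul_pos (by omega : (0:ℤ) < w - a) (by omega : (0:ℤ) < w - (a + 1))]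

lemma crossesSpoke_liftPt_liftPt {a w : ℕ} (ha : 1 ≤ a) (ha' : a ≤ k - 2) (haw : a < w) :
    CrossesSpoke k (liftPt a) (liftPt w) := by
  refine ⟨a + 1, by omega, by omega, openSegment_inter_nonempty_of_fanDet ?_ ?_ ?_ ?_⟩ <;>
    push_cast
  · rw [fanDet_spoke]
    exact mul_neg_of_pos_of_neg (by omega) (by nlinarith)
  · rw [fanDet_spoke]
    exact mul_pos (by omega) (by nlinarith)
  · simp only [fanDet]
    nlinarith [mul_pos (by omega : (0:ℤ) < w - a) (show (0:ℤ) < 2 * a * w - 1 by nlinarith)]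
  · simp only [fanDet]
    nlinarith [mul_pos (by omega : (0:ℤ) < w - a) (by omega : (0:ℤ) < w - a)]
end

lemma isTriangulation_fanGraph (k : ℕ) : IsTriangulation (fanGraph k) := by
  refine (fanGraph k).isTriangulation_of_forall_crossing fun u hu v hv huv hnot => ?_
  suffices h : CrossesSpoke k u v by
    obtain ⟨m, hm, hm', hne⟩ := h
    exact ⟨_, _, mem_fanEdges.2 (Or.inl ⟨m, ⟨hm, hm'⟩, rfl⟩), hne⟩
  change s(u, v) ∉ fanEdges k at hnot
  rcases mem_fanSet.1 hu with ⟨i, hi, rfl⟩ | ⟨a, ha, ha', rfl⟩ <;>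
    rcases mem_fanSet.1 hv with ⟨j, hj, rfl⟩ | ⟨w, hw, hw', rfl⟩
  · rcases lt_or_gt_of_ne (fun h => huv (h ▸ rfl) : i ≠ j) with h | h
    · exact crossesSpoke_parabolaPt_parabolaPt hj h hnot
    · exact (crossesSpoke_parabolaPt_parabolaPt hi h (Sym2.eq_swap ▸ hnot)).symm
  · exact (crossesSpoke_liftPt_parabolaPt hw hw' hi (Sym2.eq_swap ▸ hnot)).symm
  · exact crossesSpoke_liftPt_parabolaPt ha ha' hj hnot
  · rcases lt_or_gt_of_ne (fun h => huv (h ▸ rfl) : a ≠ w) with h | h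
    · exact crossesSpoke_liftPt_liftPt ha ha' h
    · exact (crossesSpoke_liftPt_liftPt hw hw' h).symm

lemma liftPt_mem_convexHull {a : ℕ} (ha : 1 ≤ a) :
    liftPt a ∈ convexHull ℝ ({parabolaPt 0, parabolaPt a, parabolaPt (a + 1)} : Set Pt) := by
  have ha' : (1 : ℝ) ≤ a := by exact_mod_cast ha
  have hmem :=
    (convex_convexHull ℝ ({parabolaPt 0, parabolaPt a, parabolaPt (a + 1)} : Set Pt)).sum_mem
      (t := Finset.univ)
      (w := ![1 / (2 * a * (a + 1) : ℝ), (2 * a - 1) / (2 * a), 1 / (2 * (a + 1))])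
      (z := ![parabolaPt 0, parabolaPt a, parabolaPt (a + 1)])
      (fun i _ => by fin_cases i <;> simp <;> bound)
      (by simp only [Fin.sum_univ_three]; simp; field_simp; ring)
      (fun i _ => by fin_cases i <;> exact subset_convexHull ℝ _ (by simp))
  convert hmem using 1
  simp only [Fin.sum_univ_three]
  ext <;> simp [liftPt, parabolaPt, shiftedParabolaPt] <;> field_simp <;> ring

lemma eq_of_mk_liftPt_mem_fanEdges {k a : ℕ} {w : Pt} (h : s(liftPt a, w) ∈ fanEdges k) :
    w = parabolaPt 0 ∨ w = parabolaPt a ∨ w = parabolaPt (a + 1) := by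
  rcases mem_fanEdges.1 h with ⟨b, -, he⟩ | ⟨b, -, he⟩ | ⟨b, -, he⟩ | ⟨b, -, he⟩ | ⟨b, -, he⟩ <;>
    simp only [spokeEdge, rimEdge, apexEdge, leftEdge, rightEdge, Sym2.eq_iff] at he <;>
    simp at he <;> grind

lemma orient_rim_nonneg {k : ℕ} (a : ℕ) {y : Pt} (hy : y ∈ fanSet k) :
    0 ≤ orient (parabolaPt a) (parabolaPt (a + 1)) y := by
  obtain ⟨x, e, he, rfl⟩ := exists_shiftedParabolaPt_of_mem_fanSet hy
  rw [parabolaPt, parabolaPt, orient_shiftedParabolaPt_nonneg_iff]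
  exact_mod_cast fanDet_rim_nonneg (by omega)

lemma orient_top_nonneg {k : ℕ} {y : Pt} (hy : y ∈ fanSet k) :
    0 ≤ orient (parabolaPt (k - 1)) (parabolaPt 0) y := by
  rcases Nat.eq_zero_or_pos k with rfl | hk
  · simp [fanSet] at hy
  obtain ⟨m, rfl⟩ : ∃ m, k = m + 1 := ⟨k - 1, by omega⟩
  rw [Nat.add_sub_cancel, orient_rotate]
  rcases mem_fanSet.1 hy with ⟨x, hx, rfl⟩ | ⟨x, hx, hx', rfl⟩
  · rw [parabolaPt, parabolaPt, parabolaPt, orient_shiftedParabolaPt_nonneg_iff]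
    simp only [fanDet]
    push_cast
    nlinarith [mul_nonneg (mul_nonneg (by omega : (0:ℤ) ≤ x) (by omega : (0:ℤ) ≤ m - x))
      (by omega : (0:ℤ) ≤ m)]
  · rw [liftPt, parabolaPt, parabolaPt, orient_shiftedParabolaPt_nonneg_iff]
    simp only [fanDet]
    push_cast
    have h : (1:ℤ) ≤ x * (m - x) := one_le_mul_of_one_le_of_one_le (by omega) (by omega)
    nlinarith [mul_le_mul_of_nonneg_right h (by omega : (0:ℤ) ≤ m)]

lemma subset_spokes_of_isPsFlippable {k : ℕ} {F : Finset (Sym2 Pt)}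
    (hF : IsPsFlippable (fanGraph k) F) : F ⊆ (Finset.Icc 2 (k - 2)).image spokeEdge := by
  obtain ⟨hFT, 𝒬, h𝒬, -, hdiag⟩ := hF
  intro e he
  obtain ⟨Q, hQ, hQe⟩ := hdiag e he
  obtain ⟨hQS, hcard, hconv, hhull, -⟩ := h𝒬 Q hQ
  have hQS' : ∀ y ∈ Q, y ∈ fanSet k := fun y hy => hQS hy
  have hlift : ∀ a y, 1 ≤ a → (y = parabolaPt 0 ∨ y = parabolaPt a ∨ y = parabolaPt (a + 1)) →
      ¬ IsDiagonalOf Q s(liftPt a, y) := fun a y ha hy hd =>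
    not_isDiagonalOf_of_mem_convexHull ((genPos_fanSet k).mono hQS) hcard hconv
      (isDiagonalOf_mk_iff.1 hd).1 (liftPt_mem_convexHull ha) (by simp) (by simp) (by simp)
      (fun w hw => eq_of_mk_liftPt_mem_fanEdges (hhull _ _ hw)) hy hd
  rcases mem_fanEdges.1 (hFT he) with ⟨a, ⟨ha, ha'⟩, rfl⟩ | ⟨a, -, rfl⟩ | ⟨a, ⟨ha, -⟩, rfl⟩ |
    ⟨a, ⟨ha, -⟩, rfl⟩ | ⟨a, ⟨ha, -⟩, rfl⟩
  · rcases eq_or_ne a 1 with rfl | ha₁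
    · exact absurd hQe (not_isDiagonalOf_of_orient_nonneg (by simp)
        fun y hy => orient_rim_nonneg 0 (hQS' y hy))
    rcases eq_or_ne a (k - 1) with rfl | ha₂
    · rw [spokeEdge, Sym2.eq_swap] at hQe
      exact absurd hQe (not_isDiagonalOf_of_orient_nonneg (by simp; omega)
        fun y hy => orient_top_nonneg (hQS' y hy))
    exact Finset.mem_image.2 ⟨a, Finset.mem_Icc.2 ⟨by omega, by omega⟩, rfl⟩
  · exact absurd hQe (not_isDiagonalOf_of_orient_nonneg (by simp)
      fun y hy => orient_rim_nonneg a (hQS' y hy))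
  · exact absurd hQe (hlift a _ ha (Or.inl rfl))
  · exact absurd hQe (hlift a _ ha (Or.inr (Or.inl rfl)))
  · exact absurd hQe (hlift a _ ha (Or.inr (Or.inr rfl)))

lemma card_le_of_isPsFlippable {k : ℕ} {F : Finset (Sym2 Pt)}
    (hF : IsPsFlippable (fanGraph k) F) : F.card ≤ k - 3 :=
  calc F.card ≤ ((Finset.Icc 2 (k - 2)).image spokeEdge).card :=
        Finset.card_le_card (subset_spokes_of_isPsFlippable hF)
    _ ≤ (Finset.Icc 2 (k - 2)).card := Finset.card_image_le
    _ = k - 3 := by rw [Nat.card_Icc]; omega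

/-- For infinitely many `N` there are an `N`-point set in general
position and a triangulation of it in which every set of ps-flippable edges has
size at most `N/2 - 2`. -/
theorem statement4 :
    ∀ n : ℕ, ∃ N : ℕ, n ≤ N ∧ ∃ S : Finset Pt, S.card = N ∧ GenPos S ∧
      ∃ T : PlaneGraph S, IsTriangulation T ∧
        ∀ F : Finset (Sym2 Pt), IsPsFlippable T F →
          (F.card : ℝ) ≤ (N : ℝ) / 2 - 2 := by
  intro n
  refine ⟨2 * n + 4, by omega, fanSet (n + 3), by rw [card_fanSet (by omega)]; omega,
    genPos_fanSet _, fanGraph _, isTriangulation_fanGraph _, fun F hF => ?_⟩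
  have hF' : F.card ≤ n := card_le_of_isPsFlippable hF
  push_cast
  linarith [(Nat.cast_le (α := ℝ)).2 hF']
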